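/- arXiv:2205.02216 — 2 statements merged into one kernel-verified Lean document; each statement's English description precedes it below -/
import Mathlib

section
/- In the 2-user interference network, binary power control achieves the optimal sum GDoF: for every topology α ∈ A_2 (2×2 matrix with nonnegative entries), D_{Σ,o}(α) = D_{Σ,b}(α). -/
open Finset

/-- Positive part `(x)^+ = max(x,0)`. -/
noncomputable def pPart (x : ℝ) : ℝ := max x 0

/-- TIN GDoF of user `k` under topology `α` and power allocation `r`:
`d_k(α,r) = (α_kk + r_k - max_{j≠k} (α_kj + r_j)^+)^+` (max over the empty set is 0). -/
noncomputable def gdof {K : ℕ} (α : Fin K → Fin K → ℝ) (r : Fin K → ℝ) (k : Fin K) : ℝ :=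
  pPart (α k k + r k -
    ((Finset.univ.erase k).fold max 0 fun j => pPart (α k j + r j)))

/-- Sum GDoF under allocation `r`. -/
noncomputable def sumGdof {K : ℕ} (α : Fin K → Fin K → ℝ) (r : Fin K → ℝ) : ℝ :=
  ∑ k, gdof α r k

/-- Optimal-power-control sum GDoF: supremum over all allocations with `r_k ≤ 0`. -/
noncomputable def Dopt {K : ℕ} (α : Fin K → Fin K → ℝ) : ℝ :=
  sSup {x : ℝ | ∃ r : Fin K → ℝ, (∀ k, r k ≤ 0) ∧ x = sumGdof α r}

/-- Sum GDoF achieved by binary power control with active set `T`: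
`Σ_{k∈T} (α_kk - max_{j∈T, j≠k} α_kj)^+` (max over the empty set is 0). -/
noncomputable def binSum {K : ℕ} (α : Fin K → Fin K → ℝ) (T : Finset (Fin K)) : ℝ :=
  ∑ k ∈ T, pPart (α k k - ((T.erase k).fold max 0 fun j => α k j))

/-- Binary-power-control sum GDoF: maximum over all subsets of active users. -/
noncomputable def Dbin {K : ℕ} (α : Fin K → Fin K → ℝ) : ℝ :=
  (Finset.univ : Finset (Finset (Fin K))).sup' ⟨∅, Finset.mem_univ ∅⟩ (binSum α)

/-! Every binary allocation is an admissible power allocation: a user outside the active set `T`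
backs off by more than any channel strength, so it neither transmits nor interferes, and the
active users see exactly the binary-power-control rates. Conversely, for two users, either one
user alone is active, and its rate is at most its direct strength, or both are; then each user's
back-off `r_j` lowers its own signal by `|r_j|` but the interference it causes by at most `|r_j|`,
so the sum rate is at most that of both users at full power. -/

lemma pPart_nonneg (x : ℝ) : 0 ≤ pPart x := le_max_right _ _

lemma le_pPart (x : ℝ) : x ≤ pPart x := le_max_left _ _

lemma pPart_le_pPart_add_sub {s : ℝ} (hs : s ≤ 0) (b : ℝ) : pPart b ≤ pPart (b + s) - s :=
  max_le (by linarith [le_pPart (b + s)]) (by linarith [pPart_nonneg (b + s)])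

lemma pPart_add_pPart_le {x y m : ℝ} (h0 : 0 ≤ m) (hx : x ≤ m) (hy : y ≤ m) (hxy : x + y ≤ m) :
    pPart x + pPart y ≤ m := by
  unfold pPart
  rcases max_cases x 0 with ⟨hx', -⟩ | ⟨hx', -⟩ <;>
    rcases max_cases y 0 with ⟨hy', -⟩ | ⟨hy', -⟩ <;> linarith

lemma fold_max_zero_nonneg {ι : Type*} (s : Finset ι) (f : ι → ℝ) : 0 ≤ s.fold max 0 f :=
  (le_fold_max _).2 (.inl le_rfl)

section BinaryAllocation

variable {K : ℕ} (α : Fin K → Fin K → ℝ)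

lemma binSum_singleton (k : Fin K) : binSum α {k} = pPart (α k k) := by
  simp [binSum]

lemma binSum_le_Dbin (T : Finset (Fin K)) : binSum α T ≤ Dbin α :=
  Finset.le_sup' _ (Finset.mem_univ T)

lemma Dbin_nonneg : 0 ≤ Dbin α := binSum_le_Dbin α ∅

lemma exists_binSum_eq_Dbin : ∃ T, binSum α T = Dbin α := by
  obtain ⟨T, -, hT⟩ := Finset.exists_mem_eq_sup' ⟨∅, Finset.mem_univ ∅⟩ (binSum α)
  exact ⟨T, hT.symm⟩

def binaryAlloc (T : Finset (Fin K)) (M : ℝ) : Fin K → ℝ := fun k => if k ∈ T then 0 else -M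

variable {α} {T : Finset (Fin K)} {M : ℝ}

lemma interference_binaryAlloc (hM : ∀ i j, α i j ≤ M) (k : Fin K) :
    (univ.erase k).fold max 0 (fun j => pPart (α k j + binaryAlloc T M j)) =
      (T.erase k).fold max 0 (fun j => α k j) := by
  have hnonneg := fold_max_zero_nonneg (T.erase k) (fun j => α k j)
  apply le_antisymm
  · refine (fold_max_le _).2 ⟨hnonneg, fun j hj => ?_⟩
    by_cases hjT : j ∈ T
    · rw [binaryAlloc, if_pos hjT, add_zero]
      exact max_le ((le_fold_max _).2 (.inr ⟨j, mem_erase.2 ⟨(mem_erase.1 hj).1, hjT⟩, le_rfl⟩))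
        hnonneg
    · rw [binaryAlloc, if_neg hjT, pPart, max_eq_right (by linarith [hM k j])]
      exact hnonneg
  · refine (fold_max_le _).2 ⟨fold_max_zero_nonneg _ _, fun j hj => ?_⟩
    obtain ⟨hjk, hjT⟩ := mem_erase.1 hj
    refine (le_fold_max _).2 (.inr ⟨j, mem_erase.2 ⟨hjk, mem_univ j⟩, ?_⟩)
    rw [binaryAlloc, if_pos hjT, add_zero]
    exact le_pPart _

lemma gdof_binaryAlloc_of_mem (hM : ∀ i j, α i j ≤ M) {k : Fin K} (hk : k ∈ T) :
    gdof α (binaryAlloc T M) k = pPart (α k k - (T.erase k).fold max 0 fun j => α k j) := by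
  rw [gdof, interference_binaryAlloc hM, binaryAlloc, if_pos hk, add_zero]

lemma gdof_binaryAlloc_of_notMem (hM : ∀ i j, α i j ≤ M) {k : Fin K} (hk : k ∉ T) :
    gdof α (binaryAlloc T M) k = 0 := by
  rw [gdof, interference_binaryAlloc hM, binaryAlloc, if_neg hk]
  exact max_eq_right (by linarith [hM k k, fold_max_zero_nonneg (T.erase k) fun j => α k j])

lemma sumGdof_binaryAlloc (hM : ∀ i j, α i j ≤ M) : sumGdof α (binaryAlloc T M) = binSum α T := by
  rw [sumGdof, binSum, ← Finset.sum_subset (subset_univ T)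
    fun k _ hk => gdof_binaryAlloc_of_notMem hM hk]
  exact Finset.sum_congr rfl fun k hk => gdof_binaryAlloc_of_mem hM hk

variable (α)

lemma exists_alloc_sumGdof_eq_Dbin : ∃ r : Fin K → ℝ, (∀ k, r k ≤ 0) ∧ sumGdof α r = Dbin α := by
  obtain ⟨M, hM⟩ := Finite.exists_le fun p : Fin K × Fin K => α p.1 p.2
  obtain ⟨T, hT⟩ := exists_binSum_eq_Dbin α
  refine ⟨binaryAlloc T (max M 0), fun k => ?_, ?_⟩
  · unfold binaryAlloc
    split_ifs <;> linarith [le_max_right M 0]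
  · rw [sumGdof_binaryAlloc fun i j => (hM (i, j)).trans (le_max_left M 0), hT]

end BinaryAllocation

section TwoUsers

lemma univ_erase_zero_fin_two : univ.erase (0 : Fin 2) = {1} := by decide

lemma univ_erase_one_fin_two : univ.erase (1 : Fin 2) = {0} := by decide

variable (α : Fin 2 → Fin 2 → ℝ)

lemma sumGdof_fin_two (r : Fin 2 → ℝ) :
    sumGdof α r = pPart (α 0 0 + r 0 - pPart (α 0 1 + r 1))
      + pPart (α 1 1 + r 1 - pPart (α 1 0 + r 0)) := by
  rw [sumGdof, Fin.sum_univ_two, gdof, gdof, univ_erase_zero_fin_two, univ_erase_one_fin_two,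
    fold_singleton, fold_singleton, max_eq_left (pPart_nonneg _), max_eq_left (pPart_nonneg _)]

lemma binSum_univ_fin_two :
    binSum α univ = pPart (α 0 0 - pPart (α 0 1)) + pPart (α 1 1 - pPart (α 1 0)) := by
  rw [binSum, Fin.sum_univ_two, univ_erase_zero_fin_two, univ_erase_one_fin_two,
    fold_singleton, fold_singleton]
  rfl

lemma sumGdof_le_Dbin_fin_two {r : Fin 2 → ℝ} (hr : ∀ k, r k ≤ 0) : sumGdof α r ≤ Dbin α := by
  rw [sumGdof_fin_two]
  have hsolo (k j : Fin 2) : α k k + r k - pPart (α k j + r j) ≤ Dbin α := calc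
    _ ≤ pPart (α k k) := by linarith [hr k, pPart_nonneg (α k j + r j), le_pPart (α k k)]
    _ = binSum α {k} := (binSum_singleton α k).symm
    _ ≤ Dbin α := binSum_le_Dbin α _
  refine pPart_add_pPart_le (Dbin_nonneg α) (hsolo 0 1) (hsolo 1 0) ?_
  calc _ ≤ (α 0 0 - pPart (α 0 1)) + (α 1 1 - pPart (α 1 0)) := by
        linarith [pPart_le_pPart_add_sub (hr 1) (α 0 1), pPart_le_pPart_add_sub (hr 0) (α 1 0)]
    _ ≤ binSum α univ := by
        rw [binSum_univ_fin_two]; exact add_le_add (le_pPart _) (le_pPart _)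
    _ ≤ Dbin α := binSum_le_Dbin α _

end TwoUsers

theorem stmt_4_general (α : Fin 2 → Fin 2 → ℝ) :
    Dopt α = Dbin α := by
  refine IsGreatest.csSup_eq ⟨?_, ?_⟩
  · obtain ⟨r, hr, h⟩ := exists_alloc_sumGdof_eq_Dbin α
    exact ⟨r, hr, h.symm⟩
  · rintro _ ⟨r, hr, rfl⟩
    exact sumGdof_le_Dbin_fin_two α hr

/-- in the 2-user interference network, binary power control achieves
the optimal sum GDoF: `D_{Σ,o}(α) = D_{Σ,b}(α)` for every nonnegative topology. -/
theorem stmt_4 (α : Fin 2 → Fin 2 → ℝ) (hα : ∀ i j, 0 ≤ α i j) :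
    Dopt α = Dbin α :=
  stmt_4_general α
end

section
/- For every m ≥ 1 and every K ≥ m², there exists a K-user topology α with α_ij ≥ 0 such that D_{Σ,o}(α) ≥ m · D_{Σ,b}(α) and D_{Σ,b}(α) > 0. In other words, the extremal GDoF gain of optimal over binary power control among K-user networks is at least ⌊√K⌋. -/
open Finset

lemma pPart_le {x c : ℝ} (h : x ≤ c) (hc : 0 ≤ c) : pPart x ≤ c := max_le h hc

lemma pPart_mono {x y : ℝ} (h : x ≤ y) : pPart x ≤ pPart y :=
  max_le_max h le_rfl

/-! ### The construction -/

/-- The topology: `m` blocks of `m` users each (users `0 ≤ k < m*m`, block `k / m`,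
level `k % m`), extra users inert. -/
noncomputable def Atop (m K : ℕ) : Fin K → Fin K → ℝ := fun k j =>
  if k.val < m*m ∧ j.val < m*m then
    if k = j then 1
    else if k.val / m = j.val / m then (if k.val % m < j.val % m then 1 else 0)
    else ((m : ℝ) - 1 - (k.val % m : ℕ) + ((j.val % m : ℕ))) / m
  else 0

/-- The good power allocation. -/
noncomputable def Rpow (m K : ℕ) : Fin K → ℝ := fun k =>
  if k.val < m*m then -((k.val % m : ℕ) : ℝ)/m else 0

section facts

variable {m K : ℕ} (hm : 1 ≤ m)

lemma hm0 (hm : 1 ≤ m) : (0:ℝ) < (m:ℝ) := by exact_mod_cast hm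

lemma lvl_le (hm : 1 ≤ m) (k : ℕ) : ((k % m : ℕ) : ℝ) ≤ (m:ℝ) - 1 := by
  have h : k % m + 1 ≤ m := Nat.mod_lt _ hm
  have : ((k % m + 1 : ℕ) : ℝ) ≤ (m:ℝ) := by exact_mod_cast h
  push_cast at this; linarith

lemma Atop_nonneg (hm : 1 ≤ m) (i j : Fin K) : 0 ≤ Atop m K i j := by
  unfold Atop
  have h1 := lvl_le hm i.val
  have h2 : (0:ℝ) ≤ ((j.val % m : ℕ) : ℝ) := Nat.cast_nonneg _
  have h3 := hm0 hm
  split_ifs with ha hb hc hd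
  · exact zero_le_one
  · exact zero_le_one
  · exact le_rfl
  · apply div_nonneg <;> linarith
  · exact le_rfl

lemma Atop_diag (m K : ℕ) (k : Fin K) (h : k.val < m*m) : Atop m K k k = 1 := by
  unfold Atop; simp [h]

lemma Atop_diag_le_one (m K : ℕ) (k : Fin K) : Atop m K k k ≤ 1 := by
  unfold Atop
  split_ifs with ha hb hc hd
  · exact le_rfl
  · exact le_rfl
  · exact zero_le_one
  · exact absurd rfl hb
  · exact zero_le_one

lemma Rpow_nonpos (m K : ℕ) (k : Fin K) : Rpow m K k ≤ 0 := by
  unfold Rpow; split_ifs with h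
  · have : (0:ℝ) ≤ ((k.val % m : ℕ) : ℝ) := Nat.cast_nonneg _
    have hm' : (0:ℝ) ≤ (m:ℝ) := Nat.cast_nonneg _
    rw [neg_div]
    simp only [neg_nonpos]
    positivity
  · exact le_rfl

end facts

/-- Fold over erase is nonneg. -/
lemma fold_nonneg {K : ℕ} (s : Finset (Fin K)) (f : Fin K → ℝ) :
    0 ≤ s.fold max 0 f :=
  (Finset.le_fold_max _).2 (Or.inl le_rfl)

/-- Fold dominated by the terms. -/
lemma fold_le {K : ℕ} {s : Finset (Fin K)} {f : Fin K → ℝ} {c : ℝ}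
    (hc : 0 ≤ c) (h : ∀ j ∈ s, f j ≤ c) : s.fold max 0 f ≤ c :=
  (Finset.fold_max_le _).2 ⟨hc, h⟩

lemma le_fold {K : ℕ} {s : Finset (Fin K)} {f : Fin K → ℝ} {j : Fin K}
    (hj : j ∈ s) : f j ≤ s.fold max 0 f :=
  (Finset.le_fold_max _).2 (Or.inr ⟨j, hj, le_rfl⟩)

section main

variable {m K : ℕ}

/-- Interference bound at a real receiver under the good allocation. -/
lemma interf_le (hm : 1 ≤ m) (k j : Fin K) (hk : k.val < m*m) (hjk : j ≠ k) :
    pPart (Atop m K k j + Rpow m K j) ≤ ((m:ℝ) - 1 - (k.val % m : ℕ)) / m := by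
  have hmpos := hm0 hm
  have hck : (0:ℝ) ≤ ((m:ℝ) - 1 - (k.val % m : ℕ)) / m := by
    have := lvl_le hm k.val
    apply div_nonneg <;> linarith
  by_cases hj : j.val < m*m
  · -- real interferer
    have hRj : Rpow m K j = -((j.val % m : ℕ) : ℝ)/m := by unfold Rpow; simp [hj]
    have hkj : k ≠ j := fun h => hjk h.symm
    by_cases hblk : k.val / m = j.val / m
    · by_cases hlt : k.val % m < j.val % m
      · have hA : Atop m K k j = 1 := by unfold Atop; simp [hk, hj, hkj, hblk, hlt]
        rw [hA, hRj]
        apply pPart_le _ hck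
        have hcast : ((k.val % m : ℕ) : ℝ) + 1 ≤ ((j.val % m : ℕ) : ℝ) := by exact_mod_cast hlt
        have e : 1 + -((j.val % m : ℕ):ℝ)/m = ((m:ℝ) - ((j.val % m : ℕ):ℝ))/m := by
          field_simp
          ring
        rw [e, div_le_div_iff₀ hmpos hmpos]
        nlinarith
      · have hA : Atop m K k j = 0 := by unfold Atop; simp [hk, hj, hkj, hblk, hlt]
        rw [hA, hRj]
        apply pPart_le _ hck
        have h1 : (0:ℝ) ≤ ((j.val % m : ℕ) : ℝ) := Nat.cast_nonneg _
        have : -((j.val % m : ℕ) : ℝ)/m ≤ 0 := by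
          rw [neg_div]; simp only [neg_nonpos]; positivity
        linarith
    · have hA : Atop m K k j = ((m : ℝ) - 1 - (k.val % m : ℕ) + ((j.val % m : ℕ))) / m := by
        unfold Atop; simp [hk, hj, hkj, hblk]
      rw [hA, hRj]
      apply pPart_le _ hck
      apply le_of_eq
      field_simp
      try ring
  · -- inert interferer
    have hA : Atop m K k j = 0 := by unfold Atop; simp [hj]
    have hRj : Rpow m K j = 0 := by unfold Rpow; simp [hj]
    rw [hA, hRj]
    apply pPart_le _ hck
    linarith [hck]

/-- Each real user achieves `1/m` under the good allocation. -/
lemma gdof_ge (hm : 1 ≤ m) (k : Fin K) (hk : k.val < m*m) :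
    1/(m:ℝ) ≤ gdof (Atop m K) (Rpow m K) k := by
  have hmpos := hm0 hm
  have hfold : ((Finset.univ.erase k).fold max 0 fun j => pPart (Atop m K k j + Rpow m K j))
      ≤ ((m:ℝ) - 1 - (k.val % m : ℕ)) / m := by
    apply fold_le
    · have := lvl_le hm k.val
      apply div_nonneg <;> linarith
    · intro j hj
      exact interf_le hm k j hk (Finset.ne_of_mem_erase hj)
  have hRk : Rpow m K k = -((k.val % m : ℕ) : ℝ)/m := by unfold Rpow; simp [hk]
  unfold gdof
  rw [Atop_diag m K k hk, hRk]
  refine le_trans ?_ (le_pPart _)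
  have : 1 + -((k.val % m : ℕ) : ℝ)/m - ((m:ℝ) - 1 - (k.val % m : ℕ)) / m = 1/m := by
    field_simp; ring
  linarith [hfold]

/-- Each gdof is at most 1 for any feasible `r`. -/
lemma gdof_le_one (r : Fin K → ℝ) (hr : ∀ k, r k ≤ 0) (k : Fin K) :
    gdof (Atop m K) r k ≤ 1 := by
  unfold gdof
  apply pPart_le _ zero_le_one
  have h1 := Atop_diag_le_one m K k
  have h2 := fold_nonneg (Finset.univ.erase k) (fun j => pPart (Atop m K k j + r j))
  have := hr k
  linarith

lemma bddAbove_set : BddAbove {x : ℝ | ∃ r : Fin K → ℝ, (∀ k, r k ≤ 0) ∧ x = sumGdof (Atop m K) r} := by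
  refine ⟨K, ?_⟩
  rintro x ⟨r, hr, rfl⟩
  unfold sumGdof
  calc ∑ k, gdof (Atop m K) r k ≤ ∑ _k : Fin K, (1:ℝ) :=
        Finset.sum_le_sum (fun k _ => gdof_le_one r hr k)
    _ = K := by simp

/-- Lower bound for `Dopt`. -/
lemma dopt_ge (hm : 1 ≤ m) (hK : m*m ≤ K) : (m:ℝ) ≤ Dopt (Atop m K) := by
  have hmpos := hm0 (m := m) hm
  have hsum : (m:ℝ) ≤ sumGdof (Atop m K) (Rpow m K) := by
    unfold sumGdof
    have hsub : (Finset.univ.map (Fin.castLEEmb hK)) ⊆ (Finset.univ : Finset (Fin K)) :=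
      Finset.subset_univ _
    have h1 : ∑ k ∈ Finset.univ.map (Fin.castLEEmb hK), gdof (Atop m K) (Rpow m K) k
        ≤ ∑ k, gdof (Atop m K) (Rpow m K) k := by
      apply Finset.sum_le_sum_of_subset_of_nonneg hsub
      intro k _ _; exact pPart_nonneg _
    have h2 : ∑ k ∈ Finset.univ.map (Fin.castLEEmb hK), gdof (Atop m K) (Rpow m K) k
        = ∑ i : Fin (m*m), gdof (Atop m K) (Rpow m K) (Fin.castLE hK i) := by
      rw [Finset.sum_map]; rfl
    have h3 : ∀ i : Fin (m*m), 1/(m:ℝ) ≤ gdof (Atop m K) (Rpow m K) (Fin.castLE hK i) := by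
      intro i
      exact gdof_ge hm _ i.isLt
    have h4 : (m*m : ℕ) • (1/(m:ℝ)) ≤ ∑ i : Fin (m*m), gdof (Atop m K) (Rpow m K) (Fin.castLE hK i) := by
      have := Finset.card_nsmul_le_sum Finset.univ
        (fun i : Fin (m*m) => gdof (Atop m K) (Rpow m K) (Fin.castLE hK i)) (1/(m:ℝ))
        (fun i _ => h3 i)
      simpa using this
    have h5 : (m*m : ℕ) • (1/(m:ℝ)) = (m:ℝ) := by
      rw [nsmul_eq_mul]
      push_cast
      field_simp
    linarith [h1, h2 ▸ h4, h5 ▸ h4]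
  calc (m:ℝ) ≤ sumGdof (Atop m K) (Rpow m K) := hsum
    _ ≤ Dopt (Atop m K) := le_csSup bddAbove_set ⟨Rpow m K, Rpow_nonpos m K, rfl⟩

end main

section dbin

variable {m K : ℕ}

lemma Atop_ge_one_of_higher (hm : 1 ≤ m) {k j : Fin K} (hk : k.val < m*m) (hj : j.val < m*m)
    (hkj : ¬ k = j) (hlt : k.val % m < j.val % m) : 1 ≤ Atop m K k j := by
  have hmpos := hm0 hm
  unfold Atop
  by_cases hblk : k.val / m = j.val / m
  · simp [hk, hj, hkj, hblk, hlt]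
  · simp only [hk, hj, hkj, hblk, and_self, if_true, if_false]
    rw [le_div_iff₀ hmpos]
    have : ((k.val % m : ℕ) : ℝ) + 1 ≤ ((j.val % m : ℕ) : ℝ) := by exact_mod_cast hlt
    nlinarith

lemma Atop_same_level (hm : 1 ≤ m) {k j : Fin K} (hk : k.val < m*m) (hj : j.val < m*m)
    (hkj : ¬ k = j) (heq : k.val % m = j.val % m) :
    Atop m K k j = ((m:ℝ) - 1)/m := by
  have hblk : ¬ (k.val / m = j.val / m) := by
    intro hdiv
    apply hkj
    apply Fin.ext
    conv_lhs => rw [← Nat.div_add_mod k.val m]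
    conv_rhs => rw [← Nat.div_add_mod j.val m]
    rw [hdiv, heq]
  unfold Atop
  simp only [hk, hj, hkj, hblk, and_self, if_true, if_false]
  rw [heq]
  ring

lemma binSum_le_one (hm : 1 ≤ m) (T : Finset (Fin K)) : binSum (Atop m K) T ≤ 1 := by
  have hmpos := hm0 hm
  unfold binSum
  set f : Fin K → ℝ :=
    fun k => pPart (Atop m K k k - ((T.erase k).fold max 0 fun j => Atop m K k j)) with hf
  have hMnn : ∀ k : Fin K, 0 ≤ (T.erase k).fold max 0 fun j => Atop m K k j :=
    fun k => fold_nonneg _ _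
  have hf1 : ∀ k : Fin K, f k ≤ 1 := by
    intro k
    apply pPart_le _ zero_le_one
    have := Atop_diag_le_one m K k
    have := hMnn k
    linarith
  have hextra : ∀ k : Fin K, ¬ k.val < m*m → f k ≤ 0 := by
    intro k hk
    apply pPart_le _ le_rfl
    have hA : Atop m K k k = 0 := by unfold Atop; simp [hk]
    rw [hA]
    have := hMnn k
    linarith
  by_cases hT' : (T.filter (fun k => k.val < m*m)).Nonempty
  · obtain ⟨kstar, hks, hsup⟩ := Finset.exists_mem_eq_sup _ hT' (fun k : Fin K => k.val % m)
    have hksT : kstar ∈ T := Finset.mem_of_mem_filter _ hks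
    have hksreal : kstar.val < m*m := (Finset.mem_filter.1 hks).2
    have hmax : ∀ k ∈ T, k.val < m*m → k.val % m ≤ kstar.val % m := by
      intro k hkT hkreal
      have : k ∈ T.filter (fun k => k.val < m*m) := Finset.mem_filter.2 ⟨hkT, hkreal⟩
      have h := Finset.le_sup (f := fun k : Fin K => k.val % m) this
      rw [hsup] at h
      exact h
    set P : Fin K → Prop := fun k => k.val < m*m ∧ k.val % m = kstar.val % m with hP
    have hzero : ∀ k ∈ T, ¬ P k → f k ≤ 0 := by
      intro k hkT hPk
      by_cases hkreal : k.val < m*m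
      · have hlvlne : k.val % m ≠ kstar.val % m := by
          intro h; exact hPk ⟨hkreal, h⟩
        have hlvl : k.val % m < kstar.val % m :=
          lt_of_le_of_ne (hmax k hkT hkreal) hlvlne
        have hne : ¬ k = kstar := by
          intro h; rw [h] at hlvl; exact absurd hlvl (lt_irrefl _)
        have hA1 : 1 ≤ Atop m K k kstar :=
          Atop_ge_one_of_higher hm hkreal hksreal hne hlvl
        have hMem : kstar ∈ T.erase k :=
          Finset.mem_erase.2 ⟨fun h => hne h.symm, hksT⟩
        have hM : Atop m K k kstar ≤ (T.erase k).fold max 0 fun j => Atop m K k j :=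
          le_fold hMem
        apply pPart_le _ le_rfl
        rw [Atop_diag m K k hkreal]
        linarith
      · exact hextra k hkreal
    have key : ∀ (u : ℝ), 0 ≤ u → (∀ k ∈ T, P k → f k ≤ u) →
        ∑ k ∈ T, f k ≤ (T.filter P).card * u := by
      intro u hu hfu
      calc ∑ k ∈ T, f k ≤ ∑ k ∈ T, (if P k then u else 0) := by
            apply Finset.sum_le_sum
            intro k hk
            split_ifs with h
            · exact hfu k hk h
            · exact hzero k hk h
        _ = ∑ k ∈ T.filter P, u := (Finset.sum_filter _ _).symm
        _ = (T.filter P).card * u := by rw [Finset.sum_const, nsmul_eq_mul]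
    by_cases hcard : (T.filter P).card ≤ 1
    · calc ∑ k ∈ T, f k ≤ (T.filter P).card * 1 :=
            key 1 zero_le_one (fun k _ _ => hf1 k)
        _ ≤ 1 * 1 := by
            apply mul_le_mul_of_nonneg_right _ zero_le_one
            exact_mod_cast hcard
        _ = 1 := by norm_num
    · push_neg at hcard
      have hSbound : ∀ k ∈ T, P k → f k ≤ 1/m := by
        intro k hkT hPk
        obtain ⟨j, hjS, hjk⟩ := Finset.exists_mem_ne hcard k
        have hjT : j ∈ T := Finset.mem_of_mem_filter _ hjS
        have hjP : P j := (Finset.mem_filter.1 hjS).2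
        have hkj : ¬ k = j := fun h => hjk h.symm
        have hlvl : k.val % m = j.val % m := by
          rw [hPk.2, hjP.2]
        have hA : Atop m K k j = ((m:ℝ) - 1)/m :=
          Atop_same_level hm hPk.1 hjP.1 hkj hlvl
        have hMem : j ∈ T.erase k := Finset.mem_erase.2 ⟨hjk, hjT⟩
        have hM : Atop m K k j ≤ (T.erase k).fold max 0 fun j => Atop m K k j :=
          le_fold hMem
        apply pPart_le _ (by positivity)
        rw [Atop_diag m K k hPk.1]
        rw [hA] at hM
        have e : (1:ℝ) - ((m:ℝ)-1)/m = 1/m := by field_simp; ring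
        linarith
      have hScard : (T.filter P).card ≤ m := by
        have hmem : ∀ k ∈ T.filter P, (fun k : Fin K => k.val / m) k ∈ Finset.range m := by
          intro k hk
          have hkreal : k.val < m*m := ((Finset.mem_filter.1 hk).2).1
          rw [Finset.mem_range]
          exact Nat.div_lt_iff_lt_mul (by omega) |>.2 hkreal
        have hinj : Set.InjOn (fun k : Fin K => k.val / m) (T.filter P) := by
          intro k1 hk1 k2 hk2 hdiv
          simp only [Finset.coe_filter, Set.mem_setOf_eq] at hk1 hk2
          have h1 : k1.val % m = kstar.val % m := hk1.2.2
          have h2 : k2.val % m = kstar.val % m := hk2.2.2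
          have hmod : k1.val % m = k2.val % m := by rw [h1, h2]
          simp only at hdiv
          apply Fin.ext
          conv_lhs => rw [← Nat.div_add_mod k1.val m]
          conv_rhs => rw [← Nat.div_add_mod k2.val m]
          rw [hdiv, hmod]
        have h := Finset.card_le_card_of_injOn _ hmem hinj
        simpa using h
      calc ∑ k ∈ T, f k ≤ (T.filter P).card * (1/m) :=
            key (1/m) (by positivity) hSbound
        _ ≤ (m:ℝ) * (1/m) := by
            apply mul_le_mul_of_nonneg_right _ (by positivity)
            exact_mod_cast hScard
        _ = 1 := by field_simp
  · have : ∀ k ∈ T, f k ≤ 0 := by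
      intro k hk
      apply hextra
      intro hkreal
      exact hT' ⟨k, Finset.mem_filter.2 ⟨hk, hkreal⟩⟩
    calc ∑ k ∈ T, f k ≤ 0 := Finset.sum_nonpos this
      _ ≤ 1 := zero_le_one

lemma dbin_le_one (hm : 1 ≤ m) : Dbin (Atop m K) ≤ 1 :=
  Finset.sup'_le _ _ (fun T _ => binSum_le_one hm T)

lemma dbin_ge_one (hm : 1 ≤ m) (hK : m*m ≤ K) : 1 ≤ Dbin (Atop m K) := by
  have hmm : 0 < m*m := Nat.mul_pos hm hm
  have hK0 : 0 < K := lt_of_lt_of_le hmm hK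
  set k0 : Fin K := ⟨0, hK0⟩ with hk0
  have hval : binSum (Atop m K) {k0} = 1 := by
    unfold binSum
    rw [Finset.sum_singleton, Finset.erase_singleton, Finset.fold_empty]
    rw [Atop_diag m K k0 (by simpa [hk0] using hmm)]
    unfold pPart
    norm_num
  calc (1:ℝ) = binSum (Atop m K) {k0} := hval.symm
    _ ≤ Dbin (Atop m K) := Finset.le_sup' _ (Finset.mem_univ _)

end dbin

/-- for every `m ≥ 1` and `K ≥ m²` there is a `K`-user topology whose
optimal sum GDoF is at least `m` times its binary sum GDoF (which is positive);
hence the extremal gain among `K`-user networks is at least `⌊√K⌋`. -/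
theorem stmt_11 (m K : ℕ) (hm : 1 ≤ m) (hK : m * m ≤ K) :
    ∃ α : Fin K → Fin K → ℝ, (∀ i j, 0 ≤ α i j) ∧
      (m : ℝ) * Dbin α ≤ Dopt α ∧ 0 < Dbin α := by
  refine ⟨Atop m K, fun i j => Atop_nonneg hm i j, ?_, ?_⟩
  · calc (m:ℝ) * Dbin (Atop m K) ≤ (m:ℝ) * 1 :=
        mul_le_mul_of_nonneg_left (dbin_le_one hm) (Nat.cast_nonneg m)
      _ = (m:ℝ) := mul_one _
      _ ≤ Dopt (Atop m K) := dopt_ge hm hK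
  · exact lt_of_lt_of_le one_pos (dbin_ge_one hm hK)
end
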